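/- arXiv:1208.5895 — 6 statements merged into one kernel-verified Lean document; each statement's English description precedes it below -/
import Mathlib

section
/- For any upward-closed sets p, q of heaps and any heap h with 1 ∈ dom(h) and h ∈ p * q, either h ∈ (1 ↦ _) * p or h ∈ (1 ↦ _) * q, where (1 ↦ _) = Δ_1({[1 ↦ v] | v ∈ ℤ}) denotes the upward-closed set of heaps whose domain contains location 1. -/
/-- A heap: a finite partial function from positive integers to integers. -/
abbrev Heap : Type := Finmap (fun _ : ℕ+ => ℤ)

/-- Heap extension order: `hle f h` means `h` extends `f`. -/
def hle (f h : Heap) : Prop := ∀ (x : ℕ+) (v : ℤ), f.lookup x = some v → h.lookup x = some v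

/-- Upward-closed sets of heaps. -/
def UpClosed (p : Set Heap) : Prop := ∀ ⦃f h : Heap⦄, f ∈ p → hle f h → h ∈ p

/-- Separating conjunction of sets of heaps. -/
def sep (p q : Set Heap) : Set Heap :=
  { h | ∃ f g : Heap, f ∈ p ∧ g ∈ q ∧ f.Disjoint g ∧ h = f ∪ g }

/-- Upward closure of a set of heaps. -/
def up (p : Set Heap) : Set Heap := { h | ∃ f ∈ p, hle f h }

/-- The diagonal map `Δ_n`. -/
def Delta (n : ℕ) (p : Set Heap) : Set (Fin n → Heap) :=
  { h | ∃ f ∈ p, ∀ i, hle f (h i) }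

/-- Componentwise extension order on `n`-tuples of heaps. -/
def hleN {n : ℕ} (f g : Fin n → Heap) : Prop := ∀ i, hle (f i) (g i)

/-- Componentwise upward-closed `n`-ary heap relations. -/
def UpClosedN {n : ℕ} (r : Set (Fin n → Heap)) : Prop :=
  ∀ ⦃f g : Fin n → Heap⦄, f ∈ r → hleN f g → g ∈ r

/-- `n`-ary separating conjunction. -/
def sepN {n : ℕ} (r s : Set (Fin n → Heap)) : Set (Fin n → Heap) :=
  { h | ∃ f g : Fin n → Heap, f ∈ r ∧ g ∈ s ∧ (∀ i, (f i).Disjoint (g i)) ∧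
        h = fun i => f i ∪ g i }

/-- Componentwise upward-closed binary heap relations. -/
def UpClosed2 (r : Set (Heap × Heap)) : Prop :=
  ∀ ⦃f g : Heap × Heap⦄, f ∈ r → hle f.1 g.1 → hle f.2 g.2 → g ∈ r

/-- Binary separating conjunction. -/
def sep2 (r s : Set (Heap × Heap)) : Set (Heap × Heap) :=
  { h | ∃ f g : Heap × Heap, f ∈ r ∧ g ∈ s ∧ f.1.Disjoint g.1 ∧ f.2.Disjoint g.2 ∧
        h = (f.1 ∪ g.1, f.2 ∪ g.2) }

/-- Componentwise upward closure of a binary heap relation. -/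
def up2 (r : Set (Heap × Heap)) : Set (Heap × Heap) :=
  { h | ∃ f ∈ r, hle f.1 h.1 ∧ hle f.2 h.2 }

/-- The binary interpretation `Δ₂`. -/
def Delta2 (p : Set Heap) : Set (Heap × Heap) :=
  { h | ∃ f ∈ p, hle f h.1 ∧ hle f h.2 }

/-- The upward-closed set of heaps whose domain contains location `1`,
i.e. the unary interpretation of the assertion `1 ↦ _`. -/
def onePt : Set Heap := { h | (1 : ℕ+) ∈ h }

theorem fan_counter_unary (p q : Set Heap) (hp : UpClosed p) (hq : UpClosed q)
    (h : Heap) (h1 : (1 : ℕ+) ∈ h) (hsep : h ∈ sep p q) :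
    h ∈ sep onePt p ∨ h ∈ sep onePt q := by
  obtain ⟨f, g, hf, hg, hd, rfl⟩ := hsep
  rcases Finmap.mem_union.mp h1 with h1f | h1g
  · right
    exact ⟨f, g, h1f, hg, hd, rfl⟩
  · left
    exact ⟨g, f, h1g, hf, (Finmap.Disjoint.symm _ _ hd),
      (Finmap.union_comm_of_disjoint hd).symm ▸ rfl⟩
end

section
/- The Bridge-Counter implication is unarily valid: for every upward-closed set of heaps a and every upward-closed set of heaps b, (E * a * b) ∩ (a * a) ⊆ (E * a * a) ∪ (E * E * b), where E denotes the set of heaps with nonempty domain. -/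
/-- Unary interpretation of the assertion `−` : heaps with nonempty domain. -/
def E : Set Heap := { h : Heap | ∃ x : ℕ+, x ∈ h }

theorem bridge_counter_unary (a b : Set Heap) (ha : UpClosed a) (hb : UpClosed b) :
    sep (sep E a) b ∩ sep a a ⊆ sep (sep E a) a ∪ sep (sep E E) b := by
  rintro h ⟨⟨F, k, ⟨e, g, he, hgA, hdeg, hF⟩, hk, hdFk, hh⟩, -⟩
  by_cases hemp : (∅ : Heap) ∈ a
  · left
    have hka : k ∈ a := ha hemp (fun x v hv => by simp [Finmap.lookup_empty] at hv)
    exact ⟨F, k, ⟨e, g, he, hgA, hdeg, hF⟩, hka, hdFk, hh⟩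
  · right
    have hgE : g ∈ E := by
      by_contra hne
      apply hemp
      have : g = ∅ := by
        apply Finmap.ext_lookup
        intro x
        rw [Finmap.lookup_empty, Finmap.lookup_eq_none]
        exact fun hx => hne ⟨x, hx⟩
      rwa [this] at hgA
    exact ⟨F, k, ⟨e, g, he, hgE, hdeg, hF⟩, hk, hdFk, hh⟩
end

section
/- The Bridge-Counter implication fails binarily: let r_a be the union of the componentwise upward closures of {([1↦0],[])} and {([2↦0],[2↦0])}, and r_b = Heap². Let E₂ = {(h_1,h_2) | ∃ m,v, [m↦v] ⊑ h_1 and [m↦v] ⊑ h_2} be the binary interpretation of '−'. Then the pair ([1↦0,2↦0],[2↦0]) lies in (E₂ * r_a * r_b) ∩ (r_a * r_a) but lies neither in E₂ * r_a * r_a nor in E₂ * E₂ * r_b. -/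
/-- Binary interpretation of the assertion `−`. -/
def E2 : Set (Heap × Heap) :=
  { h | ∃ (m : ℕ+) (v : ℤ),
      hle (Finmap.singleton m v) h.1 ∧ hle (Finmap.singleton m v) h.2 }

lemma hle_singleton_mem {m : ℕ+} {v : ℤ} {h : Heap}
    (hl : hle (Finmap.singleton m v) h) : m ∈ h :=
  Finmap.mem_iff.mpr ⟨v, hl m v Finmap.lookup_singleton_eq⟩

lemma disj_singletons : (Finmap.singleton 1 0 : Heap).Disjoint (Finmap.singleton 2 0 : Heap) := by
  intro x hx hx2
  rw [Finmap.mem_singleton] at hx hx2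
  subst hx; exact absurd hx2 (by decide)

theorem bridge_counter_binary_failure :
    let one0 : Heap := Finmap.singleton 1 0
    let two0 : Heap := Finmap.singleton 2 0
    let ra : Set (Heap × Heap) := up2 {(one0, (∅ : Heap))} ∪ up2 {(two0, two0)}
    let rb : Set (Heap × Heap) := Set.univ
    (one0 ∪ two0, two0) ∈ sep2 (sep2 E2 ra) rb ∩ sep2 ra ra ∧
    (one0 ∪ two0, two0) ∉ sep2 (sep2 E2 ra) ra ∧
    (one0 ∪ two0, two0) ∉ sep2 (sep2 E2 E2) rb  := by
  intro one0 two0 ra rb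
  have h1 : (1:ℕ+) ∈ one0 := Finmap.mem_singleton 1 1 (0:ℤ) |>.mpr rfl
  have h2 : (2:ℕ+) ∈ two0 := Finmap.mem_singleton 2 2 (0:ℤ) |>.mpr rfl
  have hd12 : one0.Disjoint two0 := disj_singletons
  have hd21 : two0.Disjoint one0 := hd12.symm _ _
  have hmem2 : ∀ x : ℕ+, x ∈ two0 → x = 2 := fun x hx => (Finmap.mem_singleton x 2 0).mp hx
  refine ⟨⟨?_, ?_⟩, ?_, ?_⟩
  · -- sep2 (sep2 E2 ra) rb
    refine ⟨(two0 ∪ one0, two0 ∪ ∅), (∅, ∅), ?_, trivial, ?_, ?_, ?_⟩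
    · exact ⟨(two0, two0), (one0, ∅),
        ⟨2, 0, fun x v hv => hv, fun x v hv => hv⟩,
        Or.inl ⟨(one0, ∅), rfl, fun x v hv => hv, fun x v hv => hv⟩,
        hd21, Finmap.disjoint_empty _ |>.symm _ _, rfl⟩
    · intro x hx hx'; exact Finmap.notMem_empty hx'
    · intro x hx hx'; exact Finmap.notMem_empty hx'
    · simp only [Finmap.union_empty]
      rw [Finmap.union_comm_of_disjoint hd21]
  · -- sep2 ra ra
    refine ⟨(one0, ∅), (two0, two0),
      Or.inl ⟨(one0, ∅), rfl, fun x v hv => hv, fun x v hv => hv⟩,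
      Or.inr ⟨(two0, two0), rfl, fun x v hv => hv, fun x v hv => hv⟩,
      hd12, Finmap.disjoint_empty _, ?_⟩
    rw [Finmap.empty_union]
  · -- not in sep2 (sep2 E2 ra) ra
    rintro ⟨p, q, ⟨e, a, ⟨m, v, he1, he2⟩, ha, hdea1, hdea2, rfl⟩, hq, hdpq1, hdpq2, heq⟩
    have heq2 : two0 = e.2 ∪ a.2 ∪ q.2 := congrArg Prod.snd heq
    have hme2 : m ∈ e.2 := hle_singleton_mem he2
    have hm2 : m = 2 := by
      apply hmem2
      rw [heq2]
      exact Finmap.mem_union.mpr (Or.inl (Finmap.mem_union.mpr (Or.inl hme2)))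
    rcases ha with ⟨f, rfl, hf1, hf2⟩ | ⟨f, rfl, hf1, hf2⟩
    · -- a ⊒ (one0, ∅) : 1 ∈ a.1
      have ha1 : (1:ℕ+) ∈ a.1 := Finmap.mem_iff.mpr ⟨0, hf1 1 0 Finmap.lookup_singleton_eq⟩
      rcases hq with ⟨g, rfl, hg1, hg2⟩ | ⟨g, rfl, hg1, hg2⟩
      · have hq1 : (1:ℕ+) ∈ q.1 := Finmap.mem_iff.mpr ⟨0, hg1 1 0 Finmap.lookup_singleton_eq⟩
        exact hdpq1 1 (Finmap.mem_union.mpr (Or.inr ha1)) hq1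
      · have hq2 : (2:ℕ+) ∈ q.2 := Finmap.mem_iff.mpr ⟨0, hg2 2 0 Finmap.lookup_singleton_eq⟩
        exact hdpq2 2 (Finmap.mem_union.mpr (Or.inl (hm2 ▸ hme2))) hq2
    · -- a ⊒ (two0, two0) : 2 ∈ a.2, conflicts with m = 2 ∈ e.2
      have ha2 : (2:ℕ+) ∈ a.2 := Finmap.mem_iff.mpr ⟨0, hf2 2 0 Finmap.lookup_singleton_eq⟩
      exact hdea2 2 (hm2 ▸ hme2) ha2
  · -- not in sep2 (sep2 E2 E2) rb
    rintro ⟨p, q, ⟨e, e', ⟨m, v, he1, he2⟩, ⟨m', v', he1', he2'⟩, hd1, hd2, rfl⟩,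
      hq, hdpq1, hdpq2, heq⟩
    have heq2 : two0 = e.2 ∪ e'.2 ∪ q.2 := congrArg Prod.snd heq
    have hme2 : m ∈ e.2 := hle_singleton_mem he2
    have hme2' : m' ∈ e'.2 := hle_singleton_mem he2'
    have hm2 : m = 2 := by
      apply hmem2; rw [heq2]
      exact Finmap.mem_union.mpr (Or.inl (Finmap.mem_union.mpr (Or.inl hme2)))
    have hm2' : m' = 2 := by
      apply hmem2; rw [heq2]
      exact Finmap.mem_union.mpr (Or.inl (Finmap.mem_union.mpr (Or.inr hme2')))
    exact hd2 2 (hm2 ▸ hme2) (hm2' ▸ hme2')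
end

section
/- If h is a heap and h₁ ⊑ h, h₂ ⊑ h with h₁ in the unary interpretation of φ₁ and h₂ in the unary interpretation of φ₂, and the implication φ₁ * a ∧ φ₂ * a * b ⟹ (ψ₁ * a * b) ∨ ψ₂ is valid in the unary interpretation for all upward-closed instantiations of the assertion variables a, b, then h₂ ∈ ⟦ψ₁⟧ or h ∈ ⟦ψ₂⟧. (Unary consequence of Balloon-Lift, Example 3.6.) -/
/-!
Take `ρ(a)` to be all heaps and `ρ(b)` the upward closure of `h − h₂`. Then `h` splits as
`h₁ * (h − h₁)` and as `h₂ * ∅ * (h − h₂)`, so it lies in the antecedent. If it lies in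
`ψ₁ * a * b`, the `ψ₁`-part `q` of `h` is disjoint from an extension of `h − h₂`, hence every
location of `q` lies in `h₂`, where `h₂` agrees with `h`; so `q ⊑ h₂` and `h₂ ∈ ⟦ψ₁⟧`.
-/

namespace Finmap

variable {α : Type*} {β : α → Type*} [DecidableEq α]

theorem lookup_foldl_erase (a : α) (l : List (Sigma β)) (s : Finmap β) :
    (l.foldl (fun s p => s.erase p.1) s).lookup a =
      if a ∈ l.map Sigma.fst then none else s.lookup a := by
  induction l generalizing s with
  | nil => simp
  | cons p l ih =>
    simp only [List.foldl_cons, ih, List.map_cons, List.mem_cons]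
    by_cases hap : a = p.1
    · subst hap
      simp [lookup_erase]
    · by_cases hal : a ∈ l.map Sigma.fst <;> simp [hap, hal, lookup_erase_ne hap]

theorem lookup_sdiff (a : α) (s s' : Finmap β) :
    (s \ s').lookup a = if a ∈ s' then none else s.lookup a := by
  induction s' using Finmap.induction_on with
  | H l =>
    show (l.entries.foldl (fun s p => s.erase p.1) s).lookup a = _
    rw [lookup_foldl_erase]
    congr 1

theorem disjoint_sdiff_right (s s' : Finmap β) : s'.Disjoint (s \ s') := by
  intro a has' has
  obtain ⟨b, hb⟩ := mem_iff.mp has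
  simp [lookup_sdiff, has'] at hb

end Finmap

theorem hle_refl (f : Heap) : hle f f := fun _ _ hv => hv

theorem hle_trans {f g k : Heap} (hfg : hle f g) (hgk : hle g k) : hle f k :=
  fun x v hv => hgk x v (hfg x v hv)

theorem mem_of_hle {f h : Heap} (hfh : hle f h) {x : ℕ+} (hx : x ∈ f) : x ∈ h := by
  obtain ⟨v, hv⟩ := Finmap.mem_iff.mp hx
  exact Finmap.mem_of_lookup_eq_some (hfh x v hv)

theorem hle_union_left (f g : Heap) : hle f (f ∪ g) := fun x v hv => by
  rw [Finmap.lookup_union_left (Finmap.mem_of_lookup_eq_some hv), hv]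

theorem union_sdiff_of_hle {f h : Heap} (hfh : hle f h) : f ∪ (h \ f) = h := by
  refine Finmap.ext_lookup fun x => ?_
  by_cases hx : x ∈ f
  · obtain ⟨v, hv⟩ := Finmap.mem_iff.mp hx
    rw [Finmap.lookup_union_left hx, hv, hfh x v hv]
  · rw [Finmap.lookup_union_right hx, Finmap.lookup_sdiff, if_neg hx]

theorem Finmap.Disjoint.mono_hle {f f' g g' : Heap} (hd : f'.Disjoint g') (hf : hle f f')
    (hg : hle g g') : f.Disjoint g :=
  fun x hxf hxg => hd x (mem_of_hle hf hxf) (mem_of_hle hg hxg)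

theorem hle_of_disjoint_sdiff {f k h : Heap} (hfh : hle f h) (hkh : hle k h)
    (hd : f.Disjoint (h \ k)) : hle f k := by
  intro x v hv
  have hxf := Finmap.mem_of_lookup_eq_some hv
  by_cases hxk : x ∈ k
  · obtain ⟨w, hw⟩ := Finmap.mem_iff.mp hxk
    rw [hw, ← hkh x w hw, hfh x v hv]
  · refine absurd (Finmap.mem_of_lookup_eq_some (b := v) ?_) (hd x hxf)
    rw [Finmap.lookup_sdiff, if_neg hxk, hfh x v hv]

theorem upClosed_univ : UpClosed Set.univ := fun _ _ _ _ => Set.mem_univ _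

theorem upClosed_up (p : Set Heap) : UpClosed (up p) :=
  fun _ _ ⟨e, he, hef⟩ hfh => ⟨e, he, hle_trans hef hfh⟩

theorem mem_up_singleton (g : Heap) : g ∈ up {g} := ⟨g, rfl, hle_refl g⟩

theorem sep_subset_up (p q : Set Heap) : sep p q ⊆ up p :=
  fun _ ⟨f, g, hf, _, _, hh⟩ => ⟨f, hf, hh ▸ hle_union_left f g⟩

theorem mem_sep_of_hle {p q : Set Heap} {f h : Heap} (hf : f ∈ p) (hfh : hle f h)
    (hq : h \ f ∈ q) : h ∈ sep p q :=
  ⟨f, h \ f, hf, hq, Finmap.disjoint_sdiff_right h f, (union_sdiff_of_hle hfh).symm⟩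

theorem subset_sep_univ (p : Set Heap) : p ⊆ sep p Set.univ :=
  fun f hf => mem_sep_of_hle hf (hle_refl f) (Set.mem_univ _)

theorem mem_of_mem_sep_sep_up_sdiff {Q ρ : Set Heap} (hQ : UpClosed Q) {h k : Heap}
    (hkh : hle k h) (hmem : h ∈ sep (sep Q ρ) (up {h \ k})) : k ∈ Q := by
  obtain ⟨f, g, hf, ⟨e, he, heg⟩, hfg, rfl⟩ := hmem
  obtain ⟨q, hq, hqf⟩ := sep_subset_up Q ρ hf
  have hqh : hle q (f ∪ g) := hle_trans hqf (hle_union_left f g)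
  have hd : q.Disjoint ((f ∪ g) \ k) := hfg.mono_hle hqf (he ▸ heg)
  exact hQ hq (hle_of_disjoint_sdiff hqh hkh hd)

theorem balloon_lift_unary_consequence_general
    (P1 P2 Q1 Q2 : Set Heap)
    (hQ1 : UpClosed Q1)
    (hvalid : ∀ ρa ρb : Set Heap, UpClosed ρa → UpClosed ρb →
      sep P1 ρa ∩ sep (sep P2 ρa) ρb ⊆ sep (sep Q1 ρa) ρb ∪ Q2)
    (h h1 h2 : Heap) (hh1 : hle h1 h) (hh2 : hle h2 h)
    (hm1 : h1 ∈ P1) (hm2 : h2 ∈ P2) :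
    h2 ∈ Q1 ∨ h ∈ Q2 := by
  have hmem : h ∈ sep P1 Set.univ ∩ sep (sep P2 Set.univ) (up {h \ h2}) :=
    ⟨mem_sep_of_hle hm1 hh1 (Set.mem_univ _),
      mem_sep_of_hle (subset_sep_univ P2 hm2) hh2 (mem_up_singleton _)⟩
  exact (hvalid _ _ upClosed_univ (upClosed_up _) hmem).imp_left
    (mem_of_mem_sep_sep_up_sdiff hQ1 hh2)

theorem balloon_lift_unary_consequence
    (P1 P2 Q1 Q2 : Set Heap)
    (hP1 : UpClosed P1) (hP2 : UpClosed P2) (hQ1 : UpClosed Q1) (hQ2 : UpClosed Q2)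
    (hvalid : ∀ ρa ρb : Set Heap, UpClosed ρa → UpClosed ρb →
      sep P1 ρa ∩ sep (sep P2 ρa) ρb ⊆ sep (sep Q1 ρa) ρb ∪ Q2)
    (h h1 h2 : Heap) (hh1 : hle h1 h) (hh2 : hle h2 h)
    (hm1 : h1 ∈ P1) (hm2 : h2 ∈ P2) :
    h2 ∈ Q1 ∨ h ∈ Q2 :=
  balloon_lift_unary_consequence_general P1 P2 Q1 Q2 hQ1 hvalid h h1 h2 hh1 hh2 hm1 hm2
end

section
/- If r is a supported n-ary heap relation, then either r * r is empty or r = Heap^n. -/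
/-- A supported `n`-ary heap relation. -/
def Supported {n : ℕ} (r : Set (Fin n → Heap)) : Prop :=
  ∀ f g₁ g₂ : Fin n → Heap, hleN g₁ f → hleN g₂ f → g₁ ∈ r → g₂ ∈ r →
    ∃ g ∈ r, hleN g g₁ ∧ hleN g g₂

theorem supported_sep_self {n : ℕ} (r : Set (Fin n → Heap))
    (hup : UpClosedN r) (hsupp : Supported r) :
    sepN r r = ∅ ∨ r = Set.univ := by
  rcases Set.eq_empty_or_nonempty (sepN r r) with he | ⟨h, f, g, hf, hg, hdis, hh⟩
  · exact Or.inl he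
  right
  -- f and g are below h := fun i => f i ∪ g i
  have hlef : hleN f (fun i => f i ∪ g i) := by
    intro i x v hx
    rw [Finmap.lookup_union_left (Finmap.lookup_isSome.mp (by simp [hx]))]
    exact hx
  have hleg : hleN g (fun i => f i ∪ g i) := by
    intro i x v hx
    have hxg : x ∈ g i := Finmap.lookup_isSome.mp (by simp [hx])
    rw [Finmap.lookup_union_right (fun hxf => (Finmap.Disjoint.symm _ _ (hdis i)) x hxg hxf)]
    exact hx
  obtain ⟨g₀, hg₀, hg₀f, hg₀g⟩ := hsupp _ f g hlef hleg hf hg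
  -- g₀ is the empty tuple
  have hempty : ∀ i (x : ℕ+), x ∉ g₀ i := by
    intro i x hx
    obtain ⟨v, hv⟩ := Finmap.lookup_isSome.mpr hx |> Option.isSome_iff_exists.mp
    have h1 := hg₀f i x v hv
    have h2 := hg₀g i x v hv
    exact hdis i x (Finmap.lookup_isSome.mp (by simp [h1])) (Finmap.lookup_isSome.mp (by simp [h2]))
  ext k
  simp only [Set.mem_univ, iff_true]
  refine hup hg₀ (fun i x v hv => absurd (Finmap.lookup_isSome.mp (by simp [hv])) (hempty i x))
end

section
/- The Parametricity Condition implies n-ary validity for every n ≥ 1, in the special case M = 1, N = 2 with layout φ₁ * a ⟹ (ψ₁ * a) ∨ ψ₂: suppose P, Q₁, Q₂ are upward-closed sets of heaps such that for every heap h and h₁ ⊑ h with h₁ ∈ P, either h₁ ∈ Q₁ or h ∈ Q₂. Then for every n and every componentwise-upward-closed n-ary relation ρ_a, Δ_n(P) * ρ_a ⊆ (Δ_n(Q₁) * ρ_a) ∪ Δ_n(Q₂). -/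
theorem pc_implies_nary_validity
    (P Q1 Q2 : Set Heap)
    (hP : UpClosed P) (hQ1 : UpClosed Q1) (hQ2 : UpClosed Q2)
    (hPC : ∀ h h1 : Heap, hle h1 h → h1 ∈ P → h1 ∈ Q1 ∨ h ∈ Q2) :
    ∀ (n : ℕ) (ρa : Set (Fin n → Heap)), UpClosedN ρa →
      sepN (Delta n P) ρa ⊆ sepN (Delta n Q1) ρa ∪ Delta n Q2 := by
  intro n ρa hρ h hh
  obtain ⟨f, g, ⟨f0, hf0P, hf0⟩, hg, hdisj, rfl⟩ := hh
  rcases hPC f0 f0 (fun x v hv => hv) hf0P with hQ | hQ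
  · exact Or.inl ⟨f, g, ⟨f0, hQ, hf0⟩, hg, hdisj, rfl⟩
  · refine Or.inr ⟨f0, hQ, fun i x v hv => ?_⟩
    have h1 : (f i).lookup x = some v := hf0 i x v hv
    rw [Finmap.lookup_union_left (Finmap.lookup_isSome.mp (by simp [h1]))]
    exact h1
end
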